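/- arXiv:1709.05655 — 3 statements merged into one kernel-verified Lean document; each statement's English description precedes it below -/
import Mathlib

section
/- Suppose x : [0,T] → ℝ^n is a C¹ solution of x'(t) = A x(t) + B u(t) + Σ_{i=1}^m N_i x(t) u_i(t) with x(0) = 0, where u : [0,T] → ℝ^m is continuous with ‖u(t)‖₂ ≤ k for all t, and P is a symmetric positive definite matrix satisfying the Lyapunov-type matrix inequality (A + (k²/2)I)ᵀ P⁻¹ + P⁻¹ (A + (k²/2)I) + Σ_{i=1}^m N_iᵀ P⁻¹ N_i ≤ −P⁻¹ B Bᵀ P⁻¹ (in the Loewner order). Then for all t ∈ [0,T], x(t)ᵀ P⁻¹ x(t) ≤ ∫₀ᵗ ‖u(s)‖₂² ds. -/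
open Matrix BigOperators MeasureTheory intervalIntegral

/-!
With `Q = P⁻¹`, the storage function `V x = xᵀ Q x` has derivative `2 xᵀ Q (A x + B u + ∑ uᵢ Nᵢ x)`
along a trajectory. Completing squares bounds `2 xᵀ Q B u` by `|u|² + |Bᵀ Q x|²` and
`2 uᵢ xᵀ Q Nᵢ x` by `uᵢ² xᵀ Q x + (Nᵢ x)ᵀ Q (Nᵢ x)`; since `∑ uᵢ² ≤ k²`, the Lyapunov inequality
absorbs every term except `|u|²`. Hence `V̇ ≤ |u|²`, and integrating from `V (x 0) = 0` gives the
claim.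
-/

namespace Matrix

variable {R ι κ : Type*} [Fintype ι] [Fintype κ]

theorem IsSymm.dotProduct_mulVec_comm [CommSemiring R] {Q : Matrix ι ι R} (hQ : Q.IsSymm)
    (a b : ι → R) : a ⬝ᵥ Q *ᵥ b = b ⬝ᵥ Q *ᵥ a := by
  rw [dotProduct_comm, ← vecMul_transpose, ← dotProduct_mulVec, hQ.eq]

theorem dotProduct_mulVec_transpose_mul_mul [CommSemiring R] (M : Matrix κ ι R)
    (Q : Matrix κ κ R) (v : ι → R) :
    v ⬝ᵥ (Mᵀ * Q * M) *ᵥ v = (M *ᵥ v) ⬝ᵥ Q *ᵥ (M *ᵥ v) := by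
  rw [← mulVec_mulVec, ← mulVec_mulVec, dotProduct_mulVec, vecMul_transpose]

theorem PosSemidef.two_mul_dotProduct_mulVec_le {Q : Matrix ι ι ℝ} (hQ : Q.PosSemidef)
    (a b : ι → ℝ) : 2 * (a ⬝ᵥ Q *ᵥ b) ≤ a ⬝ᵥ Q *ᵥ a + b ⬝ᵥ Q *ᵥ b := by
  have h := hQ.dotProduct_mulVec_nonneg (a - b)
  rw [star_trivial, mulVec_sub, dotProduct_sub, sub_dotProduct, sub_dotProduct,
    (isHermitian_iff_isSymm.1 hQ.isHermitian).dotProduct_mulVec_comm b a] at h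
  linarith

end Matrix

section Derivatives

variable {𝕜 ι : Type*} [NontriviallyNormedField 𝕜] [Fintype ι]
  {f g : 𝕜 → ι → 𝕜} {f' g' : ι → 𝕜} {t : 𝕜}

theorem HasDerivAt.dotProduct (hf : HasDerivAt f f' t) (hg : HasDerivAt g g' t) :
    HasDerivAt (fun s => f s ⬝ᵥ g s) (f' ⬝ᵥ g t + f t ⬝ᵥ g') t := by
  have := HasDerivAt.fun_sum (u := Finset.univ) fun i _ =>
    (hasDerivAt_pi.1 hf i).mul (hasDerivAt_pi.1 hg i)
  rw [Finset.sum_add_distrib] at this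
  exact this

theorem HasDerivAt.matrix_mulVec {κ : Type*} (Q : Matrix κ ι 𝕜) (hf : HasDerivAt f f' t) :
    HasDerivAt (fun s => Q *ᵥ f s) (Q *ᵥ f') t :=
  hasDerivAt_pi.2 fun i => by
    have := (hasDerivAt_const t (Q i)).dotProduct hf
    rw [zero_dotProduct, zero_add] at this
    exact this

theorem HasDerivAt.dotProduct_mulVec_self {Q : Matrix ι ι 𝕜} (hQ : Q.IsSymm)
    (hf : HasDerivAt f f' t) :
    HasDerivAt (fun s => f s ⬝ᵥ Q *ᵥ f s) (2 * (f t ⬝ᵥ Q *ᵥ f')) t := by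
  have h := hf.dotProduct (hf.matrix_mulVec Q)
  rwa [hQ.dotProduct_mulVec_comm f' (f t), ← two_mul] at h

end Derivatives

section BilinearSystem

variable {ι κ : Type*} [Fintype ι] [Fintype κ] [DecidableEq ι] (k : ℝ)
  (A : Matrix ι ι ℝ) (B : Matrix ι κ ℝ) (N : κ → Matrix ι ι ℝ) {Q : Matrix ι ι ℝ}

theorem lyapunov_quadratic_le_zero (hQ : Q.IsSymm)
    (hLyap : ((-(Q * B * Bᵀ * Q)) -
        ((A + (k ^ 2 / 2) • (1 : Matrix ι ι ℝ))ᵀ * Q +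
          Q * (A + (k ^ 2 / 2) • (1 : Matrix ι ι ℝ)) +
          ∑ j, (N j)ᵀ * Q * N j)).PosSemidef) (v : ι → ℝ) :
    (Bᵀ *ᵥ (Q *ᵥ v)) ⬝ᵥ (Bᵀ *ᵥ (Q *ᵥ v)) + 2 * (v ⬝ᵥ Q *ᵥ (A *ᵥ v))
      + k ^ 2 * (v ⬝ᵥ Q *ᵥ v) + ∑ j, (N j *ᵥ v) ⬝ᵥ Q *ᵥ (N j *ᵥ v) ≤ 0 := by
  have h := hLyap.dotProduct_mulVec_nonneg v
  have hB : v ⬝ᵥ (Q * B * Bᵀ * Q) *ᵥ v = (Bᵀ *ᵥ (Q *ᵥ v)) ⬝ᵥ (Bᵀ *ᵥ (Q *ᵥ v)) := by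
    rw [← mulVec_mulVec, ← mulVec_mulVec, ← mulVec_mulVec, hQ.dotProduct_mulVec_comm,
      dotProduct_comm, dotProduct_mulVec, ← mulVec_transpose]
  have hA (M : Matrix ι ι ℝ) : v ⬝ᵥ (Mᵀ * Q) *ᵥ v = v ⬝ᵥ Q *ᵥ (M *ᵥ v) := by
    rw [← mulVec_mulVec, dotProduct_mulVec, vecMul_transpose, hQ.dotProduct_mulVec_comm]
  have hN (j : κ) : v ⬝ᵥ ((N j)ᵀ * Q * N j) *ᵥ v = (N j *ᵥ v) ⬝ᵥ Q *ᵥ (N j *ᵥ v) :=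
    dotProduct_mulVec_transpose_mul_mul _ _ _
  rw [star_trivial, sub_mulVec, neg_mulVec, add_mulVec, add_mulVec, dotProduct_sub, dotProduct_neg,
    dotProduct_add, dotProduct_add, hB, hA, ← mulVec_mulVec, sum_mulVec, dotProduct_sum] at h
  simp only [hN, add_mulVec, smul_mulVec, one_mulVec, mulVec_add, mulVec_smul, dotProduct_add,
    dotProduct_smul, smul_eq_mul] at h
  linarith

theorem two_mul_dotProduct_mulVec_bilinear_le (hQ : Q.PosSemidef)
    (hLyap : ((-(Q * B * Bᵀ * Q)) -
        ((A + (k ^ 2 / 2) • (1 : Matrix ι ι ℝ))ᵀ * Q +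
          Q * (A + (k ^ 2 / 2) • (1 : Matrix ι ι ℝ)) +
          ∑ j, (N j)ᵀ * Q * N j)).PosSemidef)
    (v : ι → ℝ) (w : κ → ℝ) (hw : ∑ j, w j ^ 2 ≤ k ^ 2) :
    2 * (v ⬝ᵥ Q *ᵥ (A *ᵥ v + B *ᵥ w + ∑ j, w j • (N j *ᵥ v))) ≤ ∑ j, w j ^ 2 := by
  have hQs : Q.IsSymm := isHermitian_iff_isSymm.1 hQ.isHermitian
  set z := Bᵀ *ᵥ (Q *ᵥ v)
  have hLyap_v := lyapunov_quadratic_le_zero k A B N hQs hLyap v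
  have hB : 2 * (v ⬝ᵥ Q *ᵥ (B *ᵥ w)) ≤ z ⬝ᵥ z + ∑ j, w j ^ 2 := by
    rw [hQs.dotProduct_mulVec_comm, dotProduct_comm, dotProduct_mulVec, ← mulVec_transpose]
    simp only [dotProduct, Finset.mul_sum, ← Finset.sum_add_distrib]
    exact Finset.sum_le_sum fun j _ => by nlinarith [sq_nonneg (z j - w j)]
  have hN (j : κ) : 2 * (w j * (v ⬝ᵥ Q *ᵥ (N j *ᵥ v)))
      ≤ w j ^ 2 * (v ⬝ᵥ Q *ᵥ v) + (N j *ᵥ v) ⬝ᵥ Q *ᵥ (N j *ᵥ v) := by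
    have h := hQ.two_mul_dotProduct_mulVec_le (w j • v) (N j *ᵥ v)
    simp only [mulVec_smul, dotProduct_smul, smul_dotProduct, smul_eq_mul] at h
    linarith
  have hV : (∑ j, w j ^ 2) * (v ⬝ᵥ Q *ᵥ v) ≤ k ^ 2 * (v ⬝ᵥ Q *ᵥ v) :=
    mul_le_mul_of_nonneg_right hw (by simpa using hQ.dotProduct_mulVec_nonneg v)
  have hNsum := Finset.sum_le_sum fun j (_ : j ∈ Finset.univ) => hN j
  rw [← Finset.mul_sum, Finset.sum_add_distrib, ← Finset.sum_mul] at hNsum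
  rw [mulVec_add, mulVec_add, dotProduct_add, dotProduct_add, mulVec_sum, dotProduct_sum]
  simp only [mulVec_smul, dotProduct_smul, smul_eq_mul]
  linarith

end BilinearSystem

theorem stmt_2_general {n m : ℕ} (T k : ℝ)
    (A : Matrix (Fin n) (Fin n) ℝ) (B : Matrix (Fin n) (Fin m) ℝ)
    (N : Fin m → Matrix (Fin n) (Fin n) ℝ)
    (P : Matrix (Fin n) (Fin n) ℝ) (hP : P.PosDef)
    (hLyap : ((-(P⁻¹ * B * Bᵀ * P⁻¹)) -
        ((A + (k ^ 2 / 2) • (1 : Matrix (Fin n) (Fin n) ℝ))ᵀ * P⁻¹ +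
          P⁻¹ * (A + (k ^ 2 / 2) • (1 : Matrix (Fin n) (Fin n) ℝ)) +
          ∑ i, (N i)ᵀ * P⁻¹ * N i)).PosSemidef)
    (u : ℝ → Fin m → ℝ) (hu : Continuous u)
    (hubd : ∀ t ∈ Set.Icc (0 : ℝ) T, Real.sqrt (∑ i, (u t i) ^ 2) ≤ k)
    (x : ℝ → Fin n → ℝ)
    (hx0 : x 0 = 0)
    (hx : ∀ t ∈ Set.Icc (0 : ℝ) T,
      HasDerivAt x (A *ᵥ x t + B *ᵥ u t + ∑ i, u t i • (N i *ᵥ x t)) t) :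
    ∀ t ∈ Set.Icc (0 : ℝ) T,
      x t ⬝ᵥ P⁻¹ *ᵥ x t ≤ ∫ s in (0 : ℝ)..t, ∑ i, (u s i) ^ 2 := by
  intro t ht
  have hQ : (P⁻¹).PosSemidef := hP.posSemidef.inv
  have hIcc : Set.Icc 0 t ⊆ Set.Icc 0 T := Set.Icc_subset_Icc_right ht.2
  have hV (s : ℝ) (hs : s ∈ Set.Icc 0 t) := (hx s (hIcc hs)).dotProduct_mulVec_self
    (isHermitian_iff_isSymm.1 hQ.isHermitian)
  have hsupply : Continuous fun s => ∑ i, u s i ^ 2 := by fun_prop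
  have h := sub_le_integral_of_hasDeriv_right_of_le ht.1
    (fun s hs => (hV s hs).continuousAt.continuousWithinAt)
    (fun s hs => (hV s (Set.Ioo_subset_Icc_self hs)).hasDerivWithinAt)
    hsupply.integrableOn_Icc
    (fun s hs => two_mul_dotProduct_mulVec_bilinear_le k A B N hQ hLyap _ _
      (Real.sqrt_le_iff.1 (hubd s (hIcc (Set.Ioo_subset_Icc_self hs)))).2)
  simpa [hx0] using h

theorem stmt_2 {n m : ℕ} (T k : ℝ) (hT : 0 < T) (hk : 0 < k)
    (A : Matrix (Fin n) (Fin n) ℝ) (B : Matrix (Fin n) (Fin m) ℝ)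
    (N : Fin m → Matrix (Fin n) (Fin n) ℝ)
    (P : Matrix (Fin n) (Fin n) ℝ) (hP : P.PosDef)
    (hLyap : ((-(P⁻¹ * B * Bᵀ * P⁻¹)) -
        ((A + (k ^ 2 / 2) • (1 : Matrix (Fin n) (Fin n) ℝ))ᵀ * P⁻¹ +
          P⁻¹ * (A + (k ^ 2 / 2) • (1 : Matrix (Fin n) (Fin n) ℝ)) +
          ∑ i, (N i)ᵀ * P⁻¹ * N i)).PosSemidef)
    (u : ℝ → Fin m → ℝ) (hu : Continuous u)
    (hubd : ∀ t ∈ Set.Icc (0 : ℝ) T, Real.sqrt (∑ i, (u t i) ^ 2) ≤ k)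
    (x : ℝ → Fin n → ℝ)
    (hx0 : x 0 = 0)
    (hx : ∀ t ∈ Set.Icc (0 : ℝ) T,
      HasDerivAt x (A *ᵥ x t + B *ᵥ u t + ∑ i, u t i • (N i *ᵥ x t)) t) :
    ∀ t ∈ Set.Icc (0 : ℝ) T,
      x t ⬝ᵥ P⁻¹ *ᵥ x t ≤ ∫ s in (0 : ℝ)..t, ∑ i, (u s i) ^ 2 :=
  stmt_2_general T k A B N P hP hLyap u hu hubd x hx0 hx
end

section
/- Let P = KKᵀ and Q = LLᵀ be Cholesky-type factorizations of symmetric positive definite matrices P, Q ∈ ℝ^{n×n}, and let KᵀL = VΣUᵀ be a singular value decomposition with Σ diagonal positive definite. Then T = Σ^{-1/2} Uᵀ Lᵀ is invertible with inverse T⁻¹ = K V Σ^{-1/2}, and T P Tᵀ = Σ = T⁻ᵀ Q T⁻¹; i.e., T is a balancing transformation making both transformed Gramians equal to the diagonal matrix Σ of Hankel singular values. -/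
open Matrix

/-
Write `A = KᵀL = V Σ Uᵀ` and `S = Σ^{-1/2}`. Orthogonality of the columns of `U` and `V` gives
`A U = V Σ` and `Aᵀ V = U Σ`, so with `T = S Uᵀ Lᵀ` and `T⁻¹ = K V S`:
`T T⁻¹ = S Uᵀ (Aᵀ V) S = S Σ S = 1`,
`T P Tᵀ = S Uᵀ Aᵀ (A U) S = S Σ² S = Σ` and `T⁻ᵀ Q T⁻¹ = S Vᵀ A (Aᵀ V) S = S Σ² S = Σ`.
-/

lemma Real.inv_sqrt_mul_mul_inv_sqrt {x : ℝ} (hx : 0 < x) : (√x)⁻¹ * x * (√x)⁻¹ = 1 := by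
  rw [inv_mul_eq_div, Real.div_sqrt, mul_inv_cancel₀ (Real.sqrt_pos.2 hx).ne']

namespace Matrix

variable {ι : Type*} [Fintype ι] [DecidableEq ι]

lemma diagonal_inv_sqrt_mul_diagonal_mul_diagonal_inv_sqrt {d : ι → ℝ} (hd : ∀ i, 0 < d i) :
    diagonal (fun i => (√(d i))⁻¹) * diagonal d * diagonal (fun i => (√(d i))⁻¹) = 1 := by
  simp only [diagonal_mul_diagonal, Real.inv_sqrt_mul_mul_inv_sqrt (hd _), diagonal_one]

lemma diagonal_inv_sqrt_mul_diagonal_sq_mul_diagonal_inv_sqrt {d : ι → ℝ} (hd : ∀ i, 0 < d i) :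
    diagonal (fun i => (√(d i))⁻¹) * (diagonal d * diagonal d) * diagonal (fun i => (√(d i))⁻¹)
      = diagonal d := by
  simp only [diagonal_mul_diagonal]
  congr 1
  funext i
  calc (√(d i))⁻¹ * (d i * d i) * (√(d i))⁻¹ = (√(d i))⁻¹ * d i * (√(d i))⁻¹ * d i := by ring
    _ = d i := by rw [Real.inv_sqrt_mul_mul_inv_sqrt (hd i), one_mul]

variable {R : Type*} [CommSemiring R]

lemma mul_eq_of_eq_mul_diagonal_mul_transpose {A V U : Matrix ι ι R} {d : ι → R}
    (hA : A = V * diagonal d * Uᵀ) (hU : Uᵀ * U = 1) : A * U = V * diagonal d := by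
  rw [hA, Matrix.mul_assoc _ Uᵀ, hU, Matrix.mul_one]

lemma transpose_mul_eq_of_eq_mul_diagonal_mul_transpose {A V U : Matrix ι ι R} {d : ι → R}
    (hA : A = V * diagonal d * Uᵀ) (hV : Vᵀ * V = 1) : Aᵀ * V = U * diagonal d := by
  rw [hA, transpose_mul, transpose_mul, transpose_transpose, diagonal_transpose,
    Matrix.mul_assoc, Matrix.mul_assoc, hV, Matrix.mul_one]

end Matrix

theorem stmt_9_general {n : ℕ} (P Q K L V U : Matrix (Fin n) (Fin n) ℝ)
    (d : Fin n → ℝ) (hd : ∀ i, 0 < d i)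
    (hPfac : P = K * Kᵀ) (hQfac : Q = L * Lᵀ)
    (hV : Vᵀ * V = 1)
    (hU : Uᵀ * U = 1)
    (hSVD : Kᵀ * L = V * Matrix.diagonal d * Uᵀ) :
    let Shi : Matrix (Fin n) (Fin n) ℝ := Matrix.diagonal fun i => (Real.sqrt (d i))⁻¹
    let T : Matrix (Fin n) (Fin n) ℝ := Shi * Uᵀ * Lᵀ
    let Tinv : Matrix (Fin n) (Fin n) ℝ := K * V * Shi
    T * Tinv = 1 ∧ Tinv * T = 1 ∧
      T * P * Tᵀ = Matrix.diagonal d ∧ Tinvᵀ * Q * Tinv = Matrix.diagonal d := by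
  intro Shi T Tinv
  have hAU : Kᵀ * L * U = V * diagonal d := mul_eq_of_eq_mul_diagonal_mul_transpose hSVD hU
  have hAtV : Lᵀ * K * V = U * diagonal d := by
    simpa using transpose_mul_eq_of_eq_mul_diagonal_mul_transpose hSVD hV
  have hTTinv : T * Tinv = 1 := calc
    T * Tinv = Shi * Uᵀ * (Lᵀ * K * V) * Shi := by simp only [T, Tinv, Matrix.mul_assoc]
    _ = Shi * (Uᵀ * U) * diagonal d * Shi := by rw [hAtV]; simp only [Matrix.mul_assoc]
    _ = 1 := by rw [hU, Matrix.mul_one, diagonal_inv_sqrt_mul_diagonal_mul_diagonal_inv_sqrt hd]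
  refine ⟨hTTinv, mul_eq_one_comm.mp hTTinv, ?_, ?_⟩
  · calc T * P * Tᵀ = Shi * Uᵀ * (Lᵀ * K * (Kᵀ * L * U)) * Shi := by
          simp only [T, Shi, hPfac, transpose_mul, transpose_transpose, diagonal_transpose,
            Matrix.mul_assoc]
      _ = Shi * (Uᵀ * U) * (diagonal d * diagonal d) * Shi := by
          rw [hAU, ← Matrix.mul_assoc (Lᵀ * K), hAtV]; simp only [Matrix.mul_assoc]
      _ = diagonal d := by
          rw [hU, Matrix.mul_one, diagonal_inv_sqrt_mul_diagonal_sq_mul_diagonal_inv_sqrt hd]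
  · calc Tinvᵀ * Q * Tinv = Shi * Vᵀ * (Kᵀ * L * (Lᵀ * K * V)) * Shi := by
          simp only [Tinv, Shi, hQfac, transpose_mul, diagonal_transpose,
            Matrix.mul_assoc]
      _ = Shi * (Vᵀ * V) * (diagonal d * diagonal d) * Shi := by
          rw [hAtV, ← Matrix.mul_assoc (Kᵀ * L), hAU]; simp only [Matrix.mul_assoc]
      _ = diagonal d := by
          rw [hV, Matrix.mul_one, diagonal_inv_sqrt_mul_diagonal_sq_mul_diagonal_inv_sqrt hd]

theorem stmt_9 {n : ℕ} (P Q K L V U : Matrix (Fin n) (Fin n) ℝ)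
    (d : Fin n → ℝ) (hd : ∀ i, 0 < d i)
    (hP : P.PosDef) (hQ : Q.PosDef)
    (hK : IsUnit K.det) (hL : IsUnit L.det)
    (hPfac : P = K * Kᵀ) (hQfac : Q = L * Lᵀ)
    (hV : Vᵀ * V = 1) (hV' : V * Vᵀ = 1)
    (hU : Uᵀ * U = 1) (hU' : U * Uᵀ = 1)
    (hSVD : Kᵀ * L = V * Matrix.diagonal d * Uᵀ) :
    let Shi : Matrix (Fin n) (Fin n) ℝ := Matrix.diagonal fun i => (Real.sqrt (d i))⁻¹
    let T : Matrix (Fin n) (Fin n) ℝ := Shi * Uᵀ * Lᵀ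
    let Tinv : Matrix (Fin n) (Fin n) ℝ := K * V * Shi
    T * Tinv = 1 ∧ Tinv * T = 1 ∧
      T * P * Tᵀ = Matrix.diagonal d ∧ Tinvᵀ * Q * Tinv = Matrix.diagonal d :=
  stmt_9_general P Q K L V U d hd hPfac hQfac hV hU hSVD
end

section
/- Let Σ = diag(Σ₁, Σ₂) be the balanced type II Gramian satisfying the reachability and observability Lyapunov inequalities with constant k for the partitioned bilinear system. If the full system satisfies them, then the reduced (truncated) system of dimension r also satisfies the corresponding inequalities: A₁₁ᵀ Σ₁⁻¹ + Σ₁⁻¹ A₁₁ + Σ_{i=1}^m N_{i,11}ᵀ Σ₁⁻¹ N_{i,11} + k² Σ₁⁻¹ ≤ −Σ₁⁻¹ B₁ B₁ᵀ Σ₁⁻¹ and A₁₁ᵀ Σ₁ + Σ₁ A₁₁ + Σ_{i=1}^m N_{i,11}ᵀ Σ₁ N_{i,11} + k² Σ₁ ≤ −C₁ᵀ C₁. -/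
/-!
Write `L(A, N, k; X) = AᵀX + XA + ∑ᵢ NᵢᵀXNᵢ + k²X`. For a block-diagonal weight
`X = diag(X₁, X₂)` the leading block of `L(A, N, k; X)` is `L(A₁₁, N₁₁, k; X₁) + ∑ᵢ N_{i,21}ᵀ X₂ N_{i,21}`:
the bilinear terms leak the positive semidefinite correction `N_{i,21}ᵀ X₂ N_{i,21}` from the
discarded states. Hence the truncated Lyapunov expression dominates the leading block of the full
one, which is positive semidefinite as the compression of a positive semidefinite matrix to the
vectors `(v, 0)`. Apply this with `X = Σ⁻¹` and `X = Σ`.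
-/

open Matrix BigOperators

namespace Matrix

section toBlocks₁₁

variable {l l' n o R : Type*}

theorem toBlocks₁₁_neg [Neg R] (M : Matrix (n ⊕ o) (l ⊕ l') R) :
    (-M).toBlocks₁₁ = -M.toBlocks₁₁ :=
  rfl

theorem toBlocks₁₁_add [Add R] (M M' : Matrix (n ⊕ o) (l ⊕ l') R) :
    (M + M').toBlocks₁₁ = M.toBlocks₁₁ + M'.toBlocks₁₁ :=
  rfl

theorem toBlocks₁₁_sub [Sub R] (M M' : Matrix (n ⊕ o) (l ⊕ l') R) :
    (M - M').toBlocks₁₁ = M.toBlocks₁₁ - M'.toBlocks₁₁ :=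
  rfl

theorem toBlocks₁₁_smul {α : Type*} [SMul α R] (a : α) (M : Matrix (n ⊕ o) (l ⊕ l') R) :
    (a • M).toBlocks₁₁ = a • M.toBlocks₁₁ :=
  rfl

theorem toBlocks₁₁_transpose (M : Matrix (n ⊕ o) (l ⊕ l') R) :
    Mᵀ.toBlocks₁₁ = M.toBlocks₁₁ᵀ :=
  rfl

theorem toBlocks₁₁_sum {ι : Type*} [AddCommMonoid R] (s : Finset ι)
    (M : ι → Matrix (n ⊕ o) (l ⊕ l') R) :
    (∑ i ∈ s, M i).toBlocks₁₁ = ∑ i ∈ s, (M i).toBlocks₁₁ := by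
  ext
  simp [toBlocks₁₁, sum_apply]

variable [Fintype n] [Fintype o] [CommRing R]

theorem toBlocks₁₁_mul_fromBlocks_zero_zero (X : Matrix (l ⊕ l') (n ⊕ o) R)
    (W₁ : Matrix n n R) (W₂ : Matrix o o R) :
    (X * fromBlocks W₁ 0 0 W₂).toBlocks₁₁ = X.toBlocks₁₁ * W₁ := by
  conv_lhs => rw [← fromBlocks_toBlocks X, fromBlocks_multiply]
  simp

theorem toBlocks₁₁_fromBlocks_zero_zero_mul (X : Matrix (n ⊕ o) (l ⊕ l') R)
    (W₁ : Matrix n n R) (W₂ : Matrix o o R) :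
    (fromBlocks W₁ 0 0 W₂ * X).toBlocks₁₁ = W₁ * X.toBlocks₁₁ := by
  conv_lhs => rw [← fromBlocks_toBlocks X, fromBlocks_multiply]
  simp

theorem toBlocks₁₁_transpose_mul_fromBlocks_zero_zero_mul [Fintype l] [Fintype l']
    (X Y : Matrix (n ⊕ o) (l ⊕ l') R) (W₁ : Matrix n n R) (W₂ : Matrix o o R) :
    (Xᵀ * fromBlocks W₁ 0 0 W₂ * Y).toBlocks₁₁ =
      X.toBlocks₁₁ᵀ * W₁ * Y.toBlocks₁₁ + X.toBlocks₂₁ᵀ * W₂ * Y.toBlocks₂₁ := by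
  conv_lhs => rw [← fromBlocks_toBlocks X, ← fromBlocks_toBlocks Y]
  simp [fromBlocks_transpose, fromBlocks_multiply]

end toBlocks₁₁

section bilinearLyapunov

variable {n o ι R : Type*} [Fintype n] [Fintype o] [Fintype ι] [CommRing R]

def bilinearLyapunov (A : Matrix n n R) (N : ι → Matrix n n R) (k : R) (X : Matrix n n R) :
    Matrix n n R :=
  Aᵀ * X + X * A + ∑ i, (N i)ᵀ * X * N i + k ^ 2 • X

theorem toBlocks₁₁_bilinearLyapunov_fromBlocks_zero_zero
    (A : Matrix (n ⊕ o) (n ⊕ o) R) (N : ι → Matrix (n ⊕ o) (n ⊕ o) R) (k : R)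
    (W₁ : Matrix n n R) (W₂ : Matrix o o R) :
    (bilinearLyapunov A N k (fromBlocks W₁ 0 0 W₂)).toBlocks₁₁ =
      bilinearLyapunov A.toBlocks₁₁ (fun i ↦ (N i).toBlocks₁₁) k W₁ +
        ∑ i, (N i).toBlocks₂₁ᵀ * W₂ * (N i).toBlocks₂₁ := by
  simp only [bilinearLyapunov, toBlocks₁₁_add, toBlocks₁₁_smul, toBlocks₁₁_sum,
    toBlocks₁₁_mul_fromBlocks_zero_zero, toBlocks₁₁_fromBlocks_zero_zero_mul,
    toBlocks₁₁_transpose_mul_fromBlocks_zero_zero_mul, toBlocks₁₁_transpose, toBlocks_fromBlocks₁₁,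
    Finset.sum_add_distrib]
  abel

theorem PosSemidef.neg_sub_bilinearLyapunov_toBlocks₁₁ [PartialOrder R] [StarRing R]
    [TrivialStar R] [AddLeftMono R] {Q A : Matrix (n ⊕ o) (n ⊕ o) R}
    {N : ι → Matrix (n ⊕ o) (n ⊕ o) R} {k : R} {W₁ : Matrix n n R} {W₂ : Matrix o o R}
    (hW₂ : W₂.PosSemidef) (h : (-Q - bilinearLyapunov A N k (fromBlocks W₁ 0 0 W₂)).PosSemidef) :
    (-Q.toBlocks₁₁ - bilinearLyapunov A.toBlocks₁₁ (fun i ↦ (N i).toBlocks₁₁) k W₁).PosSemidef := by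
  have hsplit : -Q.toBlocks₁₁ - bilinearLyapunov A.toBlocks₁₁ (fun i ↦ (N i).toBlocks₁₁) k W₁ =
      (-Q - bilinearLyapunov A N k (fromBlocks W₁ 0 0 W₂)).toBlocks₁₁ +
        ∑ i, (N i).toBlocks₂₁ᵀ * W₂ * (N i).toBlocks₂₁ := by
    rw [toBlocks₁₁_sub, toBlocks₁₁_neg, toBlocks₁₁_bilinearLyapunov_fromBlocks_zero_zero]
    abel
  rw [hsplit]
  refine (h.submatrix Sum.inl).add (posSemidef_sum _ fun i _ ↦ ?_)
  simpa using hW₂.conjTranspose_mul_mul_same (N i).toBlocks₂₁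

end bilinearLyapunov

end Matrix

theorem stmt_15_general {r s m p : ℕ} (k : ℝ)
    (A : Matrix (Fin r ⊕ Fin s) (Fin r ⊕ Fin s) ℝ)
    (B : Matrix (Fin r ⊕ Fin s) (Fin m) ℝ)
    (N : Fin m → Matrix (Fin r ⊕ Fin s) (Fin r ⊕ Fin s) ℝ)
    (C : Matrix (Fin p) (Fin r ⊕ Fin s) ℝ)
    (d₁ : Fin r → ℝ) (hd₁ : ∀ i, 0 < d₁ i)
    (d₂ : Fin s → ℝ) (hd₂ : ∀ i, 0 < d₂ i)
    (S : Matrix (Fin r ⊕ Fin s) (Fin r ⊕ Fin s) ℝ)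
    (hS : S = Matrix.fromBlocks (Matrix.diagonal d₁) 0 0 (Matrix.diagonal d₂))
    -- full-system reachability inequality
    (hreach : ((-(S⁻¹ * B * Bᵀ * S⁻¹)) -
        (Aᵀ * S⁻¹ + S⁻¹ * A + (∑ i, (N i)ᵀ * S⁻¹ * N i) + k ^ 2 • S⁻¹)).PosSemidef)
    -- full-system observability inequality
    (hobs : ((-(Cᵀ * C)) -
        (Aᵀ * S + S * A + (∑ i, (N i)ᵀ * S * N i) + k ^ 2 • S)).PosSemidef) :
    ((-((Matrix.diagonal d₁)⁻¹ * (B.submatrix Sum.inl id) * (B.submatrix Sum.inl id)ᵀ *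
          (Matrix.diagonal d₁)⁻¹)) -
        ((A.toBlocks₁₁)ᵀ * (Matrix.diagonal d₁)⁻¹ + (Matrix.diagonal d₁)⁻¹ * A.toBlocks₁₁ +
          (∑ i, ((N i).toBlocks₁₁)ᵀ * (Matrix.diagonal d₁)⁻¹ * (N i).toBlocks₁₁) +
          k ^ 2 • (Matrix.diagonal d₁)⁻¹)).PosSemidef ∧
    ((-((C.submatrix id Sum.inl)ᵀ * (C.submatrix id Sum.inl))) -
        ((A.toBlocks₁₁)ᵀ * Matrix.diagonal d₁ + Matrix.diagonal d₁ * A.toBlocks₁₁ +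
          (∑ i, ((N i).toBlocks₁₁)ᵀ * Matrix.diagonal d₁ * (N i).toBlocks₁₁) +
          k ^ 2 • Matrix.diagonal d₁)).PosSemidef := by
  have hD₁ : (diagonal d₁).PosDef := posDef_diagonal_iff.mpr hd₁
  have hD₂ : (diagonal d₂).PosDef := posDef_diagonal_iff.mpr hd₂
  have hSinv : S⁻¹ = fromBlocks (diagonal d₁)⁻¹ 0 0 (diagonal d₂)⁻¹ := by
    rw [hS, inv_fromBlocks_zero₁₂_of_isUnit_iff _ _ _ (iff_of_true hD₁.isUnit hD₂.isUnit)]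
    simp
  rw [hSinv, Matrix.mul_assoc _ B] at hreach
  rw [hS] at hobs
  refine ⟨?_, PosSemidef.neg_sub_bilinearLyapunov_toBlocks₁₁ hD₂.posSemidef hobs⟩
  have h := PosSemidef.neg_sub_bilinearLyapunov_toBlocks₁₁ hD₂.inv.posSemidef hreach
  have hB : (B * Bᵀ).toBlocks₁₁ = B.submatrix Sum.inl id * (B.submatrix Sum.inl id)ᵀ := rfl
  rwa [toBlocks₁₁_mul_fromBlocks_zero_zero, toBlocks₁₁_fromBlocks_zero_zero_mul, hB,
    ← Matrix.mul_assoc] at h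

theorem stmt_15 {r s m p : ℕ} (k : ℝ) (hk : 0 < k)
    (A : Matrix (Fin r ⊕ Fin s) (Fin r ⊕ Fin s) ℝ)
    (B : Matrix (Fin r ⊕ Fin s) (Fin m) ℝ)
    (N : Fin m → Matrix (Fin r ⊕ Fin s) (Fin r ⊕ Fin s) ℝ)
    (C : Matrix (Fin p) (Fin r ⊕ Fin s) ℝ)
    (d₁ : Fin r → ℝ) (hd₁ : ∀ i, 0 < d₁ i)
    (d₂ : Fin s → ℝ) (hd₂ : ∀ i, 0 < d₂ i)
    (S : Matrix (Fin r ⊕ Fin s) (Fin r ⊕ Fin s) ℝ)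
    (hS : S = Matrix.fromBlocks (Matrix.diagonal d₁) 0 0 (Matrix.diagonal d₂))
    -- full-system reachability inequality
    (hreach : ((-(S⁻¹ * B * Bᵀ * S⁻¹)) -
        (Aᵀ * S⁻¹ + S⁻¹ * A + (∑ i, (N i)ᵀ * S⁻¹ * N i) + k ^ 2 • S⁻¹)).PosSemidef)
    -- full-system observability inequality
    (hobs : ((-(Cᵀ * C)) -
        (Aᵀ * S + S * A + (∑ i, (N i)ᵀ * S * N i) + k ^ 2 • S)).PosSemidef) :
    ((-((Matrix.diagonal d₁)⁻¹ * (B.submatrix Sum.inl id) * (B.submatrix Sum.inl id)ᵀ *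
          (Matrix.diagonal d₁)⁻¹)) -
        ((A.toBlocks₁₁)ᵀ * (Matrix.diagonal d₁)⁻¹ + (Matrix.diagonal d₁)⁻¹ * A.toBlocks₁₁ +
          (∑ i, ((N i).toBlocks₁₁)ᵀ * (Matrix.diagonal d₁)⁻¹ * (N i).toBlocks₁₁) +
          k ^ 2 • (Matrix.diagonal d₁)⁻¹)).PosSemidef ∧
    ((-((C.submatrix id Sum.inl)ᵀ * (C.submatrix id Sum.inl))) -
        ((A.toBlocks₁₁)ᵀ * Matrix.diagonal d₁ + Matrix.diagonal d₁ * A.toBlocks₁₁ +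
          (∑ i, ((N i).toBlocks₁₁)ᵀ * Matrix.diagonal d₁ * (N i).toBlocks₁₁) +
          k ^ 2 • Matrix.diagonal d₁)).PosSemidef :=
  stmt_15_general k A B N C d₁ hd₁ d₂ hd₂ S hS hreach hobs
end
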